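/- arXiv:0705.3390 — 3 statements merged into one kernel-verified Lean document; each statement's English description precedes it below -/
import Mathlib

section
/- If (Λ,p) and (Ω,q) are multifoliate structures on {1,…,n} whose completed projective systems ξ̃(Λ,p) and ξ̃(Ω,q) are equivalent, then the multifoliate structures (Λ,p) and (Ω,q) are equivalent. -/
/-! Common definitions: projective systems of finite-dimensional real vector
spaces over a poset, their limits, the groups `GL(ξ)`, invariant subspaces,
completeness, completions, and multifoliate structures. -/

structure ProjSys (Λ : Type) [PartialOrder Λ] where
  L : Λ → Type
  [instAddCommGroup : ∀ α, AddCommGroup (L α)]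
  [instModule : ∀ α, Module ℝ (L α)]
  [instFiniteDimensional : ∀ α, FiniteDimensional ℝ (L α)]
  map : ∀ {α β : Λ}, α ≤ β → (L β →ₗ[ℝ] L α)
  map_id : ∀ α : Λ, map (le_refl α) = LinearMap.id
  map_comp : ∀ {α β γ : Λ} (h₁ : α ≤ β) (h₂ : β ≤ γ),
    (map h₁).comp (map h₂) = map (h₁.trans h₂)
  map_surj : ∀ {α β : Λ} (h : α ≤ β), Function.Surjective (map h)

attribute [instance] ProjSys.instAddCommGroup ProjSys.instModule
  ProjSys.instFiniteDimensional

namespace ProjSys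

variable {Λ : Type} [PartialOrder Λ]

/-- The limit of a projective system, as a submodule of the product. -/
def limSub (ξ : ProjSys Λ) : Submodule ℝ (∀ α, ξ.L α) where
  carrier := {x | ∀ (α β : Λ) (h : α ≤ β), ξ.map h (x β) = x α}
  add_mem' := by
    intro a b ha hb α β h
    simp only [Pi.add_apply, map_add, ha α β h, hb α β h]
  zero_mem' := by
    intro α β h
    simp only [Pi.zero_apply, map_zero]
  smul_mem' := by
    intro c a ha α β h
    simp only [Pi.smul_apply, map_smul, ha α β h]

/-- The canonical projection from the limit to the `α`-th space. -/
def proj (ξ : ProjSys Λ) (α : Λ) : ↥ξ.limSub →ₗ[ℝ] ξ.L α :=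
  (LinearMap.proj α : (∀ β, ξ.L β) →ₗ[ℝ] ξ.L α).comp ξ.limSub.subtype

/-- `GL(ξ)`: the linear automorphisms of the limit that cover automorphisms
of every space of the system. -/
def GLset (ξ : ProjSys Λ) : Set (↥ξ.limSub ≃ₗ[ℝ] ↥ξ.limSub) :=
  {f | ∀ α : Λ, ∃ fα : ξ.L α ≃ₗ[ℝ] ξ.L α,
    ∀ x : ↥ξ.limSub, ξ.proj α (f x) = fα (ξ.proj α x)}

/-- A subspace of the limit is invariant if every element of `GL(ξ)`
maps it into itself. -/
def Invariant (ξ : ProjSys Λ) (K : Submodule ℝ ↥ξ.limSub) : Prop :=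
  ∀ f ∈ ξ.GLset, ∀ x ∈ K, f x ∈ K

/-- A projective system is complete if every finite-codimensional invariant
subspace of the limit is the kernel of some canonical projection. -/
def Complete (ξ : ProjSys Λ) : Prop :=
  ∀ K : Submodule ℝ ↥ξ.limSub, ξ.Invariant K →
    FiniteDimensional ℝ (↥ξ.limSub ⧸ K) → ∃ α : Λ, K = LinearMap.ker (ξ.proj α)

/-- The index set of the completion: all finite-codimensional invariant
subspaces, ordered by reverse inclusion. -/
def CompletionIndex (ξ : ProjSys Λ) : Type :=
  {K : Submodule ℝ ↥ξ.limSub //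
    ξ.Invariant K ∧ FiniteDimensional ℝ (↥ξ.limSub ⧸ K)}

instance (ξ : ProjSys Λ) : PartialOrder ξ.CompletionIndex :=
  PartialOrder.lift (fun a => OrderDual.toDual a.1)
    (fun _ _ h => Subtype.ext (congrArg OrderDual.ofDual h))

/-- The completion of a projective system: the quotients by all
finite-codimensional invariant subspaces, with the canonical epimorphisms. -/
noncomputable def completion (ξ : ProjSys Λ) : ProjSys ξ.CompletionIndex where
  L a := ↥ξ.limSub ⧸ a.1
  instAddCommGroup := fun _ => inferInstance
  instModule := fun _ => inferInstance
  instFiniteDimensional := fun a => a.2.2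
  map := fun {a b} h => Submodule.mapQ b.1 a.1 LinearMap.id
    (by rw [Submodule.comap_id]; exact h)
  map_id := by
    intro a
    apply Submodule.linearMap_qext
    ext x
    simp [Submodule.mapQ_apply]
  map_comp := by
    intro a b c h₁ h₂
    apply Submodule.linearMap_qext
    ext x
    simp [Submodule.mapQ_apply]
  map_surj := by
    intro a b h y
    obtain ⟨x, rfl⟩ := Submodule.Quotient.mk_surjective _ y
    exact ⟨Submodule.Quotient.mk x, by simp [Submodule.mapQ_apply]⟩

/-- An isomorphism of projective systems: an order isomorphism of the index
sets together with compatible linear isomorphisms of the spaces. -/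
def Isomorphic {Λ' : Type} [PartialOrder Λ'] (ξ : ProjSys Λ)
    (ξ' : ProjSys Λ') : Prop :=
  ∃ ω : Λ ≃o Λ', ∃ ψ : ∀ α : Λ, ξ.L α ≃ₗ[ℝ] ξ'.L (ω α),
    ∀ (α β : Λ) (h : α ≤ β) (x : ξ.L β),
      ξ'.map (ω.monotone h) (ψ β x) = ψ α (ξ.map h x)

/-- Equivalence of projective systems: a linear isomorphism of the limits
conjugating `GL(ξ)` onto `GL(ξ')` (such a conjugation is automatically a
group isomorphism). -/
def Equivalent {Λ' : Type} [PartialOrder Λ'] (ξ : ProjSys Λ)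
    (ξ' : ProjSys Λ') : Prop :=
  ∃ φ : ↥ξ.limSub ≃ₗ[ℝ] ↥ξ'.limSub,
    Set.BijOn (fun f => (φ.symm.trans f).trans φ) ξ.GLset ξ'.GLset

end ProjSys

/-- `GL(Λ,p)` for a multifoliate structure `(Λ,p)` on `{1,…,n}`: the linear
automorphisms `f` of `ℝⁿ` whose matrix entries `f i j = f(e_j) i` vanish
whenever `p i ≱ p j`. -/
def GLmf {n : ℕ} {Λ : Type} [PartialOrder Λ] (p : Fin n → Λ) :
    Set ((Fin n → ℝ) ≃ₗ[ℝ] (Fin n → ℝ)) :=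
  {f | ∀ i j : Fin n, ¬ p j ≤ p i → f (Pi.single j 1) i = 0}

/-- Equivalence of multifoliate structures. -/
def MFEquiv {n : ℕ} {Λ Ω : Type} [PartialOrder Λ] [PartialOrder Ω]
    (p : Fin n → Λ) (q : Fin n → Ω) : Prop :=
  ∃ φ : (Fin n → ℝ) ≃ₗ[ℝ] (Fin n → ℝ),
    Set.BijOn (fun f => (φ.symm.trans f).trans φ) (GLmf p) (GLmf q)

/-- The projective system `ξ(Λ,p)` associated with a multifoliate structure:
the spaces `L_α = ℝ^{H_α}`, `H_α = {i : p i ≤ α}`, with the coordinate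
projections. -/
noncomputable def mfSys {n : ℕ} {Λ : Type} [PartialOrder Λ] (p : Fin n → Λ) : ProjSys Λ where
  L α := {i : Fin n // p i ≤ α} → ℝ
  instAddCommGroup := fun _ => inferInstance
  instModule := fun _ => inferInstance
  instFiniteDimensional := fun _ => inferInstance
  map := fun {α β} h => LinearMap.funLeft ℝ ℝ (fun i => ⟨i.1, i.2.trans h⟩)
  map_id := fun _ => rfl
  map_comp := fun _ _ => rfl
  map_surj := by
    intro α β h
    apply LinearMap.funLeft_surjective_of_injective
    intro i j hij
    cases i
    cases j
    simpa using hij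

/-- `ker pr_α ⊆ ℝⁿ`: the vectors vanishing on all coordinates `i` with
`p i ≤ α`. -/
def kerpr {n : ℕ} {Λ : Type} [PartialOrder Λ] (p : Fin n → Λ) (α : Λ) :
    Submodule ℝ (Fin n → ℝ) where
  carrier := {x | ∀ i : Fin n, p i ≤ α → x i = 0}
  add_mem' := by
    intro a b ha hb i hi
    simp [ha i hi, hb i hi]
  zero_mem' := by
    intro i hi
    rfl
  smul_mem' := by
    intro c a ha i hi
    simp [ha i hi]

/-- The antichains of a poset, ordered by domination. -/
def AntichainsIn (Λ : Type) [PartialOrder Λ] : Type :=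
  {A : Finset Λ // IsAntichain (· ≤ ·) (A : Set Λ)}

instance {Λ : Type} [PartialOrder Λ] : LE (AntichainsIn Λ) :=
  ⟨fun A B => ∀ a ∈ A.1, ∃ b ∈ B.1, a ≤ b⟩

/-- The `GL(Λ,p)`-invariant subspaces of `ℝⁿ`, ordered by reverse
inclusion. -/
def InvariantSubspaces {n : ℕ} {Λ : Type} [PartialOrder Λ]
    (p : Fin n → Λ) : Type :=
  {K : Submodule ℝ (Fin n → ℝ) // ∀ g ∈ GLmf p, ∀ x ∈ K, g x ∈ K}

instance {n : ℕ} {Λ : Type} [PartialOrder Λ] (p : Fin n → Λ) :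
    LE (InvariantSubspaces p) :=
  ⟨fun K K' => K'.1 ≤ K.1⟩

/-- A bundled multifoliate structure on `{1,…,n}`. -/
structure MultifoliateStructure (n : ℕ) where
  Lam : Type
  [instPO : PartialOrder Lam]
  [instFin : Finite Lam]
  p : Fin n → Lam
  surj : Function.Surjective p

attribute [instance] MultifoliateStructure.instPO MultifoliateStructure.instFin

/-! Identify `ℝⁿ` with the limit of `ξ(Λ,p)` by restriction to the sets `H_α`. That limit is
finite-dimensional, so `⊥` is an index of the completion and the limit of `ξ̃(Λ,p)` is the limit
of `ξ(Λ,p)` again. Under these identifications `GL(Λ,p) = GL(ξ(Λ,p)) = GL(ξ̃(Λ,p))`: a matrix lies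
in `GL(Λ,p)` iff it preserves every `ker pr_α`; since the projections of the limit are onto, an
automorphism of the limit lies in `GL(ξ)` iff it preserves every `ker pr_α`; and it lies in `GL(ξ̃)`
iff it preserves every finite-codimensional invariant subspace, the `ker pr_α` among them.
Conjugating the given equivalence of the completions back to `ℝⁿ` gives the equivalence of the
multifoliate structures. -/

def LinearEquiv.autCongr {R V W : Type*} [Semiring R] [AddCommMonoid V] [Module R V]
    [AddCommMonoid W] [Module R W] (e : V ≃ₗ[R] W) : (V ≃ₗ[R] V) ≃ (W ≃ₗ[R] W) where
  toFun f := (e.symm.trans f).trans e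
  invFun g := (e.trans g).trans e.symm
  left_inv f := by ext; simp
  right_inv g := by ext; simp

@[simp]
lemma LinearEquiv.autCongr_apply {R V W : Type*} [Semiring R] [AddCommMonoid V] [Module R V]
    [AddCommMonoid W] [Module R W] (e : V ≃ₗ[R] W) (f : V ≃ₗ[R] V) (w : W) :
    e.autCongr f w = e (f (e.symm w)) := rfl

lemma LinearEquiv.autCongr_trans {R U V W : Type*} [Semiring R] [AddCommMonoid U] [Module R U]
    [AddCommMonoid V] [Module R V] [AddCommMonoid W] [Module R W]
    (e₁ : U ≃ₗ[R] V) (e₂ : V ≃ₗ[R] W) :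
    (e₁.trans e₂).autCongr = e₁.autCongr.trans e₂.autCongr := by
  ext f w; simp

lemma LinearMap.exists_linearEquiv_comp_eq_of_mapsTo_ker {K M N : Type*} [Field K]
    [AddCommGroup M] [Module K M] [AddCommGroup N] [Module K N] [FiniteDimensional K N]
    (π : M →ₗ[K] N) (hπ : Function.Surjective π) (f : M ≃ₗ[K] M)
    (hf : ∀ x ∈ LinearMap.ker π, f x ∈ LinearMap.ker π) :
    ∃ g : N ≃ₗ[K] N, ∀ x, π (f x) = g (π x) := by
  let g : N →ₗ[K] N := (LinearMap.ker π).liftQ (π ∘ₗ f) hf ∘ₗ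
    (π.quotKerEquivOfSurjective hπ).symm.toLinearMap
  have hg : ∀ x, g (π x) = π (f x) := fun x => by
    simp only [g, LinearMap.coe_comp, LinearEquiv.coe_coe, Function.comp_apply,
      LinearMap.quotKerEquivOfSurjective_symm_apply]
    rfl
  have hg_surj : Function.Surjective g := fun y => by
    obtain ⟨x, rfl⟩ := hπ y
    exact ⟨π (f.symm x), by rw [hg, f.apply_symm_apply]⟩
  exact ⟨.ofBijective g ⟨LinearMap.injective_iff_surjective.mpr hg_surj, hg_surj⟩,
    fun x => (hg x).symm⟩

namespace ProjSys

open Function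

variable {Λ : Type} [PartialOrder Λ] (ξ : ProjSys Λ)

lemma mapsTo_ker_proj_of_mem_GLset {f : ↥ξ.limSub ≃ₗ[ℝ] ↥ξ.limSub} (hf : f ∈ ξ.GLset) (α : Λ) :
    ∀ x ∈ LinearMap.ker (ξ.proj α), f x ∈ LinearMap.ker (ξ.proj α) := by
  intro x hx
  obtain ⟨fα, hfα⟩ := hf α
  rw [LinearMap.mem_ker] at hx ⊢
  rw [hfα, hx, map_zero]

lemma mem_GLset_iff_mapsTo_ker_proj (hξ : ∀ α, Surjective (ξ.proj α))
    (f : ↥ξ.limSub ≃ₗ[ℝ] ↥ξ.limSub) :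
    f ∈ ξ.GLset ↔ ∀ α, ∀ x ∈ LinearMap.ker (ξ.proj α), f x ∈ LinearMap.ker (ξ.proj α) :=
  ⟨ξ.mapsTo_ker_proj_of_mem_GLset, fun hf α =>
    (ξ.proj α).exists_linearEquiv_comp_eq_of_mapsTo_ker (hξ α) f (hf α)⟩

def kerProjIndex (α : Λ) : ξ.CompletionIndex :=
  ⟨LinearMap.ker (ξ.proj α), fun _ hf => ξ.mapsTo_ker_proj_of_mem_GLset hf α,
    (ξ.proj α).quotKerEquivRange.symm.finiteDimensional⟩

def botIndex [FiniteDimensional ℝ ξ.limSub] : ξ.CompletionIndex :=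
  ⟨⊥, fun f _ x hx => by rw [Submodule.mem_bot] at hx ⊢; rw [hx, map_zero], inferInstance⟩

noncomputable def toCompletionLimit : ↥ξ.limSub →ₗ[ℝ] ↥ξ.completion.limSub :=
  LinearMap.codRestrict ξ.completion.limSub (LinearMap.pi fun a => a.1.mkQ)
    fun _ _ _ _ => rfl

lemma proj_toCompletionLimit (a : ξ.CompletionIndex) (x : ↥ξ.limSub) :
    ξ.completion.proj a (ξ.toCompletionLimit x) = Submodule.Quotient.mk x := rfl

lemma toCompletionLimit_bijective [FiniteDimensional ℝ ξ.limSub] :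
    Bijective ξ.toCompletionLimit := by
  constructor
  · rw [← LinearMap.ker_eq_bot, LinearMap.ker_eq_bot']
    intro x hx
    have := congrArg (ξ.completion.proj ξ.botIndex) hx
    rw [proj_toCompletionLimit, map_zero] at this
    exact (Submodule.mem_bot ℝ).mp ((Submodule.Quotient.mk_eq_zero ξ.botIndex.1).mp this)
  · intro y
    obtain ⟨x, hx⟩ := Submodule.Quotient.mk_surjective _ (y.1 ξ.botIndex)
    refine ⟨x, Subtype.ext (funext fun a => ?_)⟩
    rw [← y.2 a ξ.botIndex (bot_le : ⊥ ≤ a.1), ← hx]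
    rfl

noncomputable def completionLimitEquiv [FiniteDimensional ℝ ξ.limSub] :
    ↥ξ.limSub ≃ₗ[ℝ] ↥ξ.completion.limSub :=
  .ofBijective _ ξ.toCompletionLimit_bijective

variable [FiniteDimensional ℝ ξ.limSub]

lemma autCongr_completionLimitEquiv_mem_GLset_iff_mapsTo (f : ↥ξ.limSub ≃ₗ[ℝ] ↥ξ.limSub) :
    ξ.completionLimitEquiv.autCongr f ∈ ξ.completion.GLset ↔
      ∀ a : ξ.CompletionIndex, ∀ x ∈ a.1, f x ∈ a.1 := by
  have proj_autCongr : ∀ a x, ξ.completion.proj a (ξ.completionLimitEquiv.autCongr f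
      (ξ.completionLimitEquiv x)) = Submodule.Quotient.mk (f x) := fun a x => by
    rw [LinearEquiv.autCongr_apply, LinearEquiv.symm_apply_apply]
    rfl
  constructor
  · intro hF a x hx
    obtain ⟨Fa, hFa⟩ := hF a
    have hx0 : ξ.completion.proj a (ξ.completionLimitEquiv x) = 0 :=
      (Submodule.Quotient.mk_eq_zero a.1).mpr hx
    have := hFa (ξ.completionLimitEquiv x)
    rw [proj_autCongr, hx0, map_zero] at this
    exact (Submodule.Quotient.mk_eq_zero a.1).mp this
  · intro hf a
    have := a.2.2
    obtain ⟨g, hg⟩ := a.1.mkQ.exists_linearEquiv_comp_eq_of_mapsTo_ker a.1.mkQ_surjective f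
      (by simpa only [Submodule.ker_mkQ] using hf a)
    refine ⟨g, fun y => ?_⟩
    obtain ⟨x, rfl⟩ := ξ.completionLimitEquiv.surjective y
    rw [proj_autCongr]
    exact hg x

lemma autCongr_completionLimitEquiv_mem_GLset_iff (hξ : ∀ α, Surjective (ξ.proj α))
    (f : ↥ξ.limSub ≃ₗ[ℝ] ↥ξ.limSub) :
    ξ.completionLimitEquiv.autCongr f ∈ ξ.completion.GLset ↔ f ∈ ξ.GLset := by
  rw [autCongr_completionLimitEquiv_mem_GLset_iff_mapsTo, mem_GLset_iff_mapsTo_ker_proj ξ hξ]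
  exact ⟨fun hf α => hf (ξ.kerProjIndex α),
    fun hf a => a.2.1 f ((mem_GLset_iff_mapsTo_ker_proj ξ hξ f).mpr hf)⟩

end ProjSys

lemma mem_GLmf_iff_forall_mapsTo_kerpr {n : ℕ} {Λ : Type} [PartialOrder Λ] (p : Fin n → Λ)
    (f : (Fin n → ℝ) ≃ₗ[ℝ] (Fin n → ℝ)) :
    f ∈ GLmf p ↔ ∀ α, ∀ x ∈ kerpr p α, f x ∈ kerpr p α := by
  constructor
  · intro hf α x hx
    rw [← Finset.univ_sum_single x, map_sum]
    refine Submodule.sum_mem _ fun j _ => ?_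
    by_cases hj : p j ≤ α
    · simp [hx j hj, (kerpr p α).zero_mem]
    · intro i hi
      have : Pi.single j (x j) = x j • (Pi.single j 1 : Fin n → ℝ) := by
        rw [← Pi.single_smul', smul_eq_mul, mul_one]
      rw [this, map_smul, Pi.smul_apply, hf i j fun hji => hj (hji.trans hi), smul_zero]
  · intro hf i j hij
    refine hf (p i) (Pi.single j 1) (fun k hk => Pi.single_eq_of_ne ?_ 1) i le_rfl
    rintro rfl
    exact hij hk

namespace mfSys

open Function ProjSys

variable {n : ℕ} {Λ : Type} [PartialOrder Λ] (p : Fin n → Λ)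

noncomputable def limitEquiv : (Fin n → ℝ) ≃ₗ[ℝ] ↥(mfSys p).limSub where
  toFun x := ⟨fun _ i => x i.1, fun _ _ _ => rfl⟩
  map_add' _ _ := rfl
  map_smul' _ _ := rfl
  invFun y i := y.1 (p i) ⟨i, le_rfl⟩
  left_inv _ := rfl
  right_inv y := Subtype.ext <| funext fun α => funext fun i =>
    (congrFun (y.2 (p i.1) α i.2) ⟨i.1, le_rfl⟩).symm

lemma proj_limitEquiv (α : Λ) (x : Fin n → ℝ) :
    (mfSys p).proj α (limitEquiv p x) = fun i => x i.1 := rfl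

lemma proj_surjective (α : Λ) : Surjective ((mfSys p).proj α) :=
  Surjective.of_comp (g := limitEquiv p) <|
    LinearMap.funLeft_surjective_of_injective ℝ ℝ _ Subtype.val_injective

lemma limitEquiv_mem_ker_proj_iff (α : Λ) (x : Fin n → ℝ) :
    limitEquiv p x ∈ LinearMap.ker ((mfSys p).proj α) ↔ x ∈ kerpr p α := by
  rw [LinearMap.mem_ker, proj_limitEquiv]
  exact ⟨fun h i hi => congrFun h ⟨i, hi⟩, fun h => funext fun i => h i.1 i.2⟩

lemma autCongr_limitEquiv_mem_GLset_iff (f : (Fin n → ℝ) ≃ₗ[ℝ] (Fin n → ℝ)) :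
    (limitEquiv p).autCongr f ∈ (mfSys p).GLset ↔ f ∈ GLmf p := by
  rw [mem_GLset_iff_mapsTo_ker_proj _ (proj_surjective p), mem_GLmf_iff_forall_mapsTo_kerpr]
  refine forall_congr' fun α => ?_
  rw [(limitEquiv p).surjective.forall]
  simp only [LinearEquiv.autCongr_apply, LinearEquiv.symm_apply_apply,
    limitEquiv_mem_ker_proj_iff]

instance : FiniteDimensional ℝ ↥(mfSys p).limSub :=
  (limitEquiv p).finiteDimensional

noncomputable def completionLimitEquiv :
    (Fin n → ℝ) ≃ₗ[ℝ] ↥(mfSys p).completion.limSub :=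
  (limitEquiv p).trans (mfSys p).completionLimitEquiv

lemma mem_GLmf_iff_autCongr_mem_completion_GLset (f : (Fin n → ℝ) ≃ₗ[ℝ] (Fin n → ℝ)) :
    f ∈ GLmf p ↔ (completionLimitEquiv p).autCongr f ∈ (mfSys p).completion.GLset := by
  rw [completionLimitEquiv, LinearEquiv.autCongr_trans, Equiv.trans_apply,
    autCongr_completionLimitEquiv_mem_GLset_iff _ (proj_surjective p),
    autCongr_limitEquiv_mem_GLset_iff]

end mfSys

theorem stmt_9_general {n : ℕ} {Λ Ω : Type} [PartialOrder Λ] [PartialOrder Ω]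
    (p : Fin n → Λ) (q : Fin n → Ω)
    (h : (mfSys p).completion.Equivalent (mfSys q).completion) :
    MFEquiv p q := by
  obtain ⟨φ, hφ⟩ := h
  set Θp := mfSys.completionLimitEquiv p
  set Θq := mfSys.completionLimitEquiv q
  have hΘp : Set.BijOn Θp.autCongr (GLmf p) (mfSys p).completion.GLset :=
    Θp.autCongr.bijOn fun f => (mfSys.mem_GLmf_iff_autCongr_mem_completion_GLset p f).symm
  have hΘq : Set.BijOn Θq.autCongr.symm (mfSys q).completion.GLset (GLmf q) :=
    Θq.autCongr.symm.bijOn fun g => by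
      rw [mfSys.mem_GLmf_iff_autCongr_mem_completion_GLset q, Equiv.apply_symm_apply]
  refine ⟨(Θp.trans φ).trans Θq.symm, ?_⟩
  have hconj : (fun f => (((Θp.trans φ).trans Θq.symm).symm.trans f).trans
      ((Θp.trans φ).trans Θq.symm)) = Θq.autCongr.symm ∘ φ.autCongr ∘ Θp.autCongr := by
    funext f; ext x; rfl
  rw [hconj]
  exact hΘq.comp (hφ.comp hΘp)

/-- If the completed projective systems of two multifoliate
structures are equivalent, then the multifoliate structures are
equivalent. -/
theorem stmt_9 {n : ℕ} {Λ Ω : Type} [PartialOrder Λ] [PartialOrder Ω]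
    [Finite Λ] [Finite Ω]
    (p : Fin n → Λ) (q : Fin n → Ω)
    (hp : Function.Surjective p) (hq : Function.Surjective q)
    (h : (mfSys p).completion.Equivalent (mfSys q).completion) :
    MFEquiv p q :=
  stmt_9_general p q h
end

section
/- Let (Λ,p) be a multifoliate structure on {1,…,n}. Then the map α ↦ ker pr_α is injective and order-reversing with order-reversing inverse on its image: for all α, β ∈ Λ, α ≤ β if and only if ker pr_β ⊆ ker pr_α. Consequently Λ is canonically order-isomorphic to the subposet of singleton antichains inside the poset of all GL(Λ,p)-invariant subspaces of ℝ^n ordered by reverse inclusion. -/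
/-! The standard basis vector `eᵢ` lies in `ker pr_β` exactly when `p i ≰ β`; since `p` is
surjective, every `α` is some `p i`, so inclusions between the kernels detect the order of `Λ`.
Invariance holds because an element of `GL(Λ,p)` sends `eⱼ` to a vector supported on the
coordinates `i` with `p j ≤ p i`, and `ker pr_α` is spanned by the `eⱼ` with `p j ≰ α`. -/

section kerpr

variable {n : ℕ} {Λ : Type} [PartialOrder Λ] {p : Fin n → Λ}

theorem kerpr_antitone : Antitone (kerpr p) :=
  fun _ _ hαβ _ hx i hi => hx i (hi.trans hαβ)

theorem single_mem_kerpr_iff {α : Λ} {i : Fin n} :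
    Pi.single i (1 : ℝ) ∈ kerpr p α ↔ ¬ p i ≤ α := by
  refine ⟨fun h hi => by simpa using h i hi, fun hi j hj => ?_⟩
  have hji : j ≠ i := by rintro rfl; exact hi hj
  simp [hji]

theorem kerpr_le_kerpr_iff (hp : Function.Surjective p) {α β : Λ} :
    kerpr p β ≤ kerpr p α ↔ α ≤ β := by
  refine ⟨fun h => ?_, fun h => kerpr_antitone h⟩
  obtain ⟨i, rfl⟩ := hp α
  by_contra hi
  exact single_mem_kerpr_iff.1 (h (single_mem_kerpr_iff.2 hi)) le_rfl

theorem kerpr_injective (hp : Function.Surjective p) : Function.Injective (kerpr p) :=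
  fun _ _ h => le_antisymm ((kerpr_le_kerpr_iff hp).1 h.ge) ((kerpr_le_kerpr_iff hp).1 h.le)

theorem GLmf.apply_single_mem_kerpr {g : (Fin n → ℝ) ≃ₗ[ℝ] (Fin n → ℝ)} (hg : g ∈ GLmf p)
    {α : Λ} {j : Fin n} (hj : ¬ p j ≤ α) : g (Pi.single j 1) ∈ kerpr p α :=
  fun i hi => hg i j fun hji => hj (hji.trans hi)

theorem GLmf.apply_mem_kerpr {g : (Fin n → ℝ) ≃ₗ[ℝ] (Fin n → ℝ)} (hg : g ∈ GLmf p)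
    {α : Λ} {x : Fin n → ℝ} (hx : x ∈ kerpr p α) : g x ∈ kerpr p α := by
  rw [pi_eq_sum_univ' x, map_sum]
  refine Submodule.sum_mem _ fun j _ => ?_
  rw [map_smul]
  by_cases hj : p j ≤ α
  · simp [hx j hj]
  · exact Submodule.smul_mem _ _ (GLmf.apply_single_mem_kerpr hg hj)

variable (p) in
def kerprInvariant (α : Λ) : InvariantSubspaces p :=
  ⟨kerpr p α, fun _ hg _ hx => GLmf.apply_mem_kerpr hg hx⟩

noncomputable def kerprOrderIso (hp : Function.Surjective p) :
    Λ ≃o {K : InvariantSubspaces p // ∃ α : Λ, K.1 = kerpr p α} where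
  toEquiv := Equiv.ofBijective (fun α => ⟨kerprInvariant p α, α, rfl⟩)
    ⟨fun _ _ h => kerpr_injective hp (congrArg (fun K => K.1.1) h),
      fun ⟨_, α, hα⟩ => ⟨α, Subtype.ext (Subtype.ext hα.symm)⟩⟩
  map_rel_iff' := kerpr_le_kerpr_iff hp

end kerpr

theorem stmt_13_general {n : ℕ} {Λ : Type} [PartialOrder Λ]
    (p : Fin n → Λ) (hp : Function.Surjective p) :
    Function.Injective (kerpr p) ∧
    (∀ α β : Λ, α ≤ β ↔ kerpr p β ≤ kerpr p α) ∧
    ∃ e : Λ ≃o {K : InvariantSubspaces p // ∃ α : Λ, K.1 = kerpr p α},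
      ∀ α : Λ, ((e α).1).1 = kerpr p α :=
  ⟨kerpr_injective hp, fun _ _ => (kerpr_le_kerpr_iff hp).symm, kerprOrderIso hp, fun _ => rfl⟩

/-- `α ↦ ker pr_α` is injective, and `α ≤ β` iff
`ker pr_β ⊆ ker pr_α`; consequently `Λ` is order-isomorphic to the subposet
of the invariant subspaces (in reverse inclusion order) consisting of the
`ker pr_α`. -/
theorem stmt_13 {n : ℕ} {Λ : Type} [PartialOrder Λ] [Finite Λ]
    (p : Fin n → Λ) (hp : Function.Surjective p) :
    Function.Injective (kerpr p) ∧
    (∀ α β : Λ, α ≤ β ↔ kerpr p β ≤ kerpr p α) ∧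
    ∃ e : Λ ≃o {K : InvariantSubspaces p // ∃ α : Λ, K.1 = kerpr p α},
      ∀ α : Λ, ((e α).1).1 = kerpr p α :=
  stmt_13_general p hp
end

section
/- If (Λ,p) and (Ω,q) are equivalent multifoliate structures on {1,…,n}, then the partially ordered sets Λ and Ω are order-isomorphic. -/
/-! Conjugation by `φ` carries the `GL(Λ,p)`-invariant subspaces of `ℝⁿ` bijectively, and
preserving inclusion, onto the `GL(Ω,q)`-invariant ones. The elementary maps
`x ↦ x + xᵢ eⱼ` with `p i ≤ p j` lie in `GL(Λ,p)`, and they force every invariant subspace to be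
a coordinate subspace `{x | xᵢ = 0 whenever p i ∈ s}` for a lower set `s` of `Λ`; conversely
all of these are invariant, and they are ordered by reverse inclusion of `s`. Hence the lattices
of lower sets of `Λ` and `Ω` are isomorphic, and by Birkhoff a finite poset is recovered from
its lattice of lower sets as the poset of sup-irreducible elements. -/

lemma SupIrred.map_orderIso {α β : Type*} [SemilatticeSup α] [SemilatticeSup β] {a : α}
    (ha : SupIrred a) (e : α ≃o β) : SupIrred (e a) := by
  refine ⟨fun hmin => ha.1 (e.isMin_apply.1 hmin), fun b c hbc => ?_⟩
  have h : e.symm b ⊔ e.symm c = a := by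
    rw [← e.symm.map_sup, hbc, e.symm_apply_apply]
  exact (ha.2 h).imp (fun h' => by rw [← h', e.apply_symm_apply])
    fun h' => by rw [← h', e.apply_symm_apply]

def OrderIso.supIrredCongr {α β : Type*} [SemilatticeSup α] [SemilatticeSup β] (e : α ≃o β) :
    {a : α // SupIrred a} ≃o {b : β // SupIrred b} where
  toEquiv := e.toEquiv.subtypeEquiv fun a =>
    ⟨fun ha => ha.map_orderIso e, fun ha => by simpa using ha.map_orderIso e.symm⟩
  map_rel_iff' := e.le_iff_le

noncomputable def OrderIso.ofLowerSet {α β : Type*} [PartialOrder α] [Finite α]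
    [PartialOrder β] [Finite β] (e : LowerSet α ≃o LowerSet β) : α ≃o β :=
  (OrderIso.supIrredLowerSet.trans e.supIrredCongr).trans OrderIso.supIrredLowerSet.symm

lemma invariant_iff_map_invariant {R V W : Type*} [Semiring R] [AddCommMonoid V] [Module R V]
    [AddCommMonoid W] [Module R W] (φ : V ≃ₗ[R] W) {G : Set (V ≃ₗ[R] V)} {G' : Set (W ≃ₗ[R] W)}
    (hφ : Set.BijOn (fun f => (φ.symm.trans f).trans φ) G G') (K : Submodule R V) :
    (∀ g ∈ G, ∀ x ∈ K, g x ∈ K) ↔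
      ∀ g ∈ G', ∀ y ∈ K.map φ.toLinearMap, g y ∈ K.map φ.toLinearMap := by
  simp only [Submodule.mem_map_equiv]
  refine ⟨fun hK g hg y hy => ?_, fun hK f hf x hx => ?_⟩
  · obtain ⟨f, hf, rfl⟩ := hφ.surjOn hg
    simpa using hK f hf _ hy
  · simpa using hK _ (hφ.mapsTo hf) (φ x) (by simpa using hx)

section Shear

variable {n : ℕ}

lemma shear_injective (i j : Fin n) :
    Function.Injective (LinearMap.id + (LinearMap.proj i).smulRight (Pi.single j 1) :
      (Fin n → ℝ) →ₗ[ℝ] (Fin n → ℝ)) := by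
  rw [← LinearMap.ker_eq_bot, LinearMap.ker_eq_bot']
  intro x hx
  have hx' : x + x i • (Pi.single j 1 : Fin n → ℝ) = 0 := hx
  have hxi : x i * (1 + (Pi.single j 1 : Fin n → ℝ) i) = 0 := by
    simpa [mul_add] using congr_fun hx' i
  have hpos : 0 < 1 + (Pi.single j 1 : Fin n → ℝ) i := by
    rw [Pi.single_apply]; split_ifs <;> norm_num
  have hxi0 : x i = 0 := (mul_eq_zero.1 hxi).resolve_right hpos.ne'
  simpa [hxi0] using hx'

/-- The elementary map `x ↦ x + x i • e j`; for `i = j` it doubles the `i`-th coordinate. -/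
noncomputable def shear (i j : Fin n) : (Fin n → ℝ) ≃ₗ[ℝ] (Fin n → ℝ) :=
  LinearEquiv.ofInjectiveEndo _ (shear_injective i j)

lemma shear_apply (i j : Fin n) (x : Fin n → ℝ) :
    shear i j x = x + x i • Pi.single j 1 := rfl

lemma shear_mem_GLmf {Λ : Type} [PartialOrder Λ] {p : Fin n → Λ} {i j : Fin n}
    (hij : p i ≤ p j) : shear i j ∈ GLmf p := by
  intro k l hlk
  have hne : l ≠ k := fun h => hlk (h ▸ le_rfl)
  by_cases hli : l = i
  · subst hli
    have hkj : k ≠ j := fun h => hlk (h ▸ hij)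
    simp [shear_apply, hne.symm, hkj]
  · simp [shear_apply, hne.symm, Ne.symm hli]

end Shear

section CoordSubspace

variable {n : ℕ} {Λ : Type} {p : Fin n → Λ}

/-- `kerpr p α` is `coordSubspace p (Iic α)`. -/
def coordSubspace (p : Fin n → Λ) (s : Set Λ) : Submodule ℝ (Fin n → ℝ) :=
  Submodule.pi (p ⁻¹' s) fun _ => ⊥

lemma mem_coordSubspace {s : Set Λ} {x : Fin n → ℝ} :
    x ∈ coordSubspace p s ↔ ∀ i, p i ∈ s → x i = 0 := by
  simp [coordSubspace, Submodule.mem_pi]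

lemma single_mem_of_invariant [PartialOrder Λ] {K : Submodule ℝ (Fin n → ℝ)}
    (hK : ∀ g ∈ GLmf p, ∀ x ∈ K, g x ∈ K) {x : Fin n → ℝ} (hx : x ∈ K) {i j : Fin n}
    (hxi : x i ≠ 0) (hij : p i ≤ p j) : (Pi.single j 1 : Fin n → ℝ) ∈ K := by
  have hshear : x i • (Pi.single j 1 : Fin n → ℝ) ∈ K := by
    simpa [shear_apply] using K.sub_mem (hK _ (shear_mem_GLmf hij) x hx) hx
  simpa [smul_smul, inv_mul_cancel₀ hxi] using K.smul_mem (x i)⁻¹ hshear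

lemma coordSubspace_invariant [PartialOrder Λ] {s : Set Λ} (hs : IsLowerSet s) :
    ∀ g ∈ GLmf p, ∀ x ∈ coordSubspace p s, g x ∈ coordSubspace p s := by
  intro g hg x hx
  rw [mem_coordSubspace] at hx ⊢
  intro i hi
  rw [← Finset.univ_sum_single x, map_sum, Finset.sum_apply]
  refine Finset.sum_eq_zero fun j _ => ?_
  by_cases hj : p j ∈ s
  · simp [hx j hj]
  · have hji : ¬ p j ≤ p i := fun h => hj (hs h hi)
    rw [← mul_one (x j), ← smul_eq_mul, Pi.single_smul', map_smul, Pi.smul_apply,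
      hg i j hji, smul_zero]

lemma coordSubspace_le_coordSubspace_iff (hp : Function.Surjective p) {s t : Set Λ} :
    coordSubspace p s ≤ coordSubspace p t ↔ t ⊆ s := by
  refine ⟨fun hst α hαt => ?_, fun hts x hx => ?_⟩
  · by_contra hαs
    obtain ⟨i, rfl⟩ := hp α
    have hi : (Pi.single i 1 : Fin n → ℝ) ∈ coordSubspace p s :=
      mem_coordSubspace.2 fun k hk => Pi.single_eq_of_ne (by rintro rfl; exact hαs hk) 1
    simpa using mem_coordSubspace.1 (hst hi) i hαt
  · rw [mem_coordSubspace] at hx ⊢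
    exact fun i hi => hx i (hts hi)

lemma exists_lowerSet_coordSubspace_eq [PartialOrder Λ] (hp : Function.Surjective p)
    {K : Submodule ℝ (Fin n → ℝ)} (hK : ∀ g ∈ GLmf p, ∀ x ∈ K, g x ∈ K) :
    ∃ s : LowerSet Λ, coordSubspace p s = K := by
  let s : Set Λ := {α | ∀ x ∈ K, ∀ i, p i = α → x i = 0}
  have hs : IsLowerSet s := by
    intro α β hβα hα x hx i hi
    by_contra hxi
    obtain ⟨j, rfl⟩ := hp α
    have hj : (Pi.single j 1 : Fin n → ℝ) ∈ K := single_mem_of_invariant hK hx hxi (hi ▸ hβα)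
    simpa using hα _ hj j rfl
  refine ⟨⟨s, hs⟩, le_antisymm (fun x hx => ?_) fun x hx =>
    mem_coordSubspace.2 fun i hi => hi x hx i rfl⟩
  rw [← Finset.univ_sum_single x]
  refine K.sum_mem fun j _ => ?_
  by_cases hxj : x j = 0
  · simp [hxj]
  · have hj : p j ∉ s := fun h => hxj (mem_coordSubspace.1 hx j h)
    simp only [s, Set.mem_ofPred_eq, not_forall] at hj
    obtain ⟨y, hy, i, hij, hyi⟩ := hj
    rw [← mul_one (x j), ← smul_eq_mul, Pi.single_smul']
    exact K.smul_mem _ (single_mem_of_invariant hK hy hyi hij.le)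

end CoordSubspace

section InvariantSubspaces

variable {n : ℕ} {Λ Ω : Type} [PartialOrder Λ] [PartialOrder Ω]

noncomputable def lowerSetOrderIsoInvariantSubspaces {p : Fin n → Λ}
    (hp : Function.Surjective p) : LowerSet Λ ≃o InvariantSubspaces p :=
  RelIso.ofSurjective
    { toFun := fun s => ⟨coordSubspace p s, coordSubspace_invariant s.lower⟩
      inj' := fun _ _ hst =>
        le_antisymm ((coordSubspace_le_coordSubspace_iff hp).1 (congrArg Subtype.val hst).ge)
          ((coordSubspace_le_coordSubspace_iff hp).1 (congrArg Subtype.val hst).le)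
      map_rel_iff' := coordSubspace_le_coordSubspace_iff hp }
    fun K =>
      let ⟨s, hs⟩ := exists_lowerSet_coordSubspace_eq hp K.2
      ⟨s, Subtype.ext hs⟩

noncomputable def InvariantSubspaces.mapOfConj {p : Fin n → Λ} {q : Fin n → Ω}
    (φ : (Fin n → ℝ) ≃ₗ[ℝ] (Fin n → ℝ))
    (hφ : Set.BijOn (fun f => (φ.symm.trans f).trans φ) (GLmf p) (GLmf q)) :
    InvariantSubspaces p ≃o InvariantSubspaces q where
  toFun K := ⟨K.1.map φ.toLinearMap, (invariant_iff_map_invariant φ hφ K.1).1 K.2⟩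
  invFun K := ⟨K.1.map φ.symm.toLinearMap, (invariant_iff_map_invariant φ hφ _).2
    (((Submodule.map_symm_eq_iff φ).1 rfl).symm ▸ K.2)⟩
  left_inv _ := Subtype.ext ((Submodule.map_symm_eq_iff φ).2 rfl)
  right_inv _ := Subtype.ext ((Submodule.map_symm_eq_iff φ).1 rfl)
  map_rel_iff' {K K'} := Submodule.map_le_map_iff_of_injective φ.injective K'.1 K.1

end InvariantSubspaces

/-- Equivalent multifoliate structures have order-isomorphic
index posets. -/
theorem stmt_14 {n : ℕ} {Λ Ω : Type} [PartialOrder Λ] [PartialOrder Ω]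
    [Finite Λ] [Finite Ω]
    (p : Fin n → Λ) (q : Fin n → Ω)
    (hp : Function.Surjective p) (hq : Function.Surjective q)
    (h : MFEquiv p q) :
    Nonempty (Λ ≃o Ω) := by
  obtain ⟨φ, hφ⟩ := h
  exact ⟨OrderIso.ofLowerSet <| (lowerSetOrderIsoInvariantSubspaces hp).trans <|
    (InvariantSubspaces.mapOfConj φ hφ).trans (lowerSetOrderIsoInvariantSubspaces hq).symm⟩
end
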